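/- arXiv:2205.06936 — 4 statements merged into one kernel-verified Lean document; each statement's English description precedes it below -/
import Mathlib

section
/- Every assignment (b, η) that satisfies all hard constraints of the MaxSAT encoding has weight at least the learning objective of its constructed classifier: wt(b, η) ≥ |E(R_b)| + λ·|R_b|, where |R_b| = |{(i,j) | b (i,j) = true}|. In particular, every misclassified sample (y l ≠ φ_l(b)) forces η l = true. -/
/-- Every assignment `(b, η)` satisfying all hard constraints has weight
at least the learning objective `|E(R_b)| + λ·|R_b|`; in particular every misclassified
sample forces its error variable to be `true`. -/
theorem maxsat_weight_lower_bound
    (n m k : ℕ)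
    (X : Fin n → Fin m → Bool) (y : Fin n → Bool)
    (lam : ℝ) (hlam : 0 ≤ lam)
    (b : Fin k × Fin m → Bool) (η : Fin n → Bool)
    (hhard : ∀ l : Fin n, η l = false →
      y l = decide (∀ i : Fin k, ∃ j : Fin m, b (i, j) = true ∧ X l j = true)) :
    (((Finset.univ.filter (fun l : Fin n => η l = true)).card : ℝ)
        + lam * ((Finset.univ.filter (fun p : Fin k × Fin m => b p = true)).card : ℝ)
      ≥ ((Finset.univ.filter (fun l : Fin n =>
            y l ≠ decide (∀ i : Fin k, ∃ j : Fin m, b (i, j) = true ∧ X l j = true))).card : ℝ)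
        + lam * ((Finset.univ.filter (fun p : Fin k × Fin m => b p = true)).card : ℝ)) ∧
    (∀ l : Fin n,
      y l ≠ decide (∀ i : Fin k, ∃ j : Fin m, b (i, j) = true ∧ X l j = true) →
      η l = true) := by
  have key : ∀ l : Fin n,
      y l ≠ decide (∀ i : Fin k, ∃ j : Fin m, b (i, j) = true ∧ X l j = true) →
      η l = true := by
    intro l hl
    by_contra h
    exact hl (hhard l (by simpa using h))
  refine ⟨?_, key⟩
  have hsub : (Finset.univ.filter (fun l : Fin n =>
      y l ≠ decide (∀ i : Fin k, ∃ j : Fin m, b (i, j) = true ∧ X l j = true))) ⊆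
      (Finset.univ.filter (fun l : Fin n => η l = true)) := by
    intro l hl
    simp only [Finset.mem_filter, Finset.mem_univ, true_and] at *
    exact key l hl
  have := Finset.card_le_card hsub
  have : ((Finset.univ.filter (fun l : Fin n =>
      y l ≠ decide (∀ i : Fin k, ∃ j : Fin m, b (i, j) = true ∧ X l j = true))).card : ℝ)
      ≤ ((Finset.univ.filter (fun l : Fin n => η l = true)).card : ℝ) := by
    exact_mod_cast this
  linarith
end

section
/- Correctness of the MaxSAT formulation (Construction 1): if (b*, η*) is an optimal assignment of the MaxSAT encoding, then the constructed classifier R_{b*} minimizes the joint learning objective over all k-clause CNF classifiers; that is, for every b : Fin k × Fin m → Bool, |E(R_{b*})| + λ·|R_{b*}| ≤ |E(R_b)| + λ·|R_b|, and moreover wt(b*, η*) = |E(R_{b*})| + λ·|R_{b*}|. -/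
/-- Construction 1: If `(b*, η*)` is an optimal assignment of the MaxSAT
encoding, then the constructed classifier `R_{b*}` minimizes the joint objective
`|E(R)| + λ·|R|` over all k-clause CNF classifiers, and the optimal weight equals
this objective value. -/
theorem maxsat_construction_correctness
    (n m k : ℕ)
    (X : Fin n → Fin m → Bool) (y : Fin n → Bool)
    (lam : ℝ) (hlam : 0 ≤ lam)
    (bstar : Fin k × Fin m → Bool) (ηstar : Fin n → Bool)
    (hhard : ∀ l : Fin n, ηstar l = false →
      y l = decide (∀ i : Fin k, ∃ j : Fin m, bstar (i, j) = true ∧ X l j = true))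
    (hopt : ∀ (b : Fin k × Fin m → Bool) (η : Fin n → Bool),
      (∀ l : Fin n, η l = false →
        y l = decide (∀ i : Fin k, ∃ j : Fin m, b (i, j) = true ∧ X l j = true)) →
      ((Finset.univ.filter (fun l : Fin n => ηstar l = true)).card : ℝ)
          + lam * ((Finset.univ.filter (fun p : Fin k × Fin m => bstar p = true)).card : ℝ)
        ≤ ((Finset.univ.filter (fun l : Fin n => η l = true)).card : ℝ)
          + lam * ((Finset.univ.filter (fun p : Fin k × Fin m => b p = true)).card : ℝ)) :
    (∀ b : Fin k × Fin m → Bool,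
      ((Finset.univ.filter (fun l : Fin n =>
            y l ≠ decide (∀ i : Fin k, ∃ j : Fin m, bstar (i, j) = true ∧ X l j = true))).card : ℝ)
          + lam * ((Finset.univ.filter (fun p : Fin k × Fin m => bstar p = true)).card : ℝ)
        ≤ ((Finset.univ.filter (fun l : Fin n =>
            y l ≠ decide (∀ i : Fin k, ∃ j : Fin m, b (i, j) = true ∧ X l j = true))).card : ℝ)
          + lam * ((Finset.univ.filter (fun p : Fin k × Fin m => b p = true)).card : ℝ)) ∧
    (((Finset.univ.filter (fun l : Fin n => ηstar l = true)).card : ℝ)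
        + lam * ((Finset.univ.filter (fun p : Fin k × Fin m => bstar p = true)).card : ℝ)
      = ((Finset.univ.filter (fun l : Fin n =>
            y l ≠ decide (∀ i : Fin k, ∃ j : Fin m, bstar (i, j) = true ∧ X l j = true))).card : ℝ)
        + lam * ((Finset.univ.filter (fun p : Fin k × Fin m => bstar p = true)).card : ℝ)) := by
  -- error set of bstar is contained in the set of true ηstar variables
  have hsub : (Finset.univ.filter (fun l : Fin n =>
        y l ≠ decide (∀ i : Fin k, ∃ j : Fin m, bstar (i, j) = true ∧ X l j = true))) ⊆
      (Finset.univ.filter (fun l : Fin n => ηstar l = true)) := by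
    intro l hl
    simp only [Finset.mem_filter, Finset.mem_univ, true_and] at hl ⊢
    by_contra h
    exact hl (hhard l (by simpa using h))
  have hErr_le : ((Finset.univ.filter (fun l : Fin n =>
        y l ≠ decide (∀ i : Fin k, ∃ j : Fin m, bstar (i, j) = true ∧ X l j = true))).card : ℝ)
      ≤ ((Finset.univ.filter (fun l : Fin n => ηstar l = true)).card : ℝ) := by
    exact_mod_cast Finset.card_le_card hsub
  -- for each b, the natural η assignment
  have hwt : ∀ b : Fin k × Fin m → Bool,
      ((Finset.univ.filter (fun l : Fin n => ηstar l = true)).card : ℝ)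
          + lam * ((Finset.univ.filter (fun p : Fin k × Fin m => bstar p = true)).card : ℝ)
        ≤ ((Finset.univ.filter (fun l : Fin n =>
            y l ≠ decide (∀ i : Fin k, ∃ j : Fin m, b (i, j) = true ∧ X l j = true))).card : ℝ)
          + lam * ((Finset.univ.filter (fun p : Fin k × Fin m => b p = true)).card : ℝ) := by
    intro b
    have h := hopt b (fun l => decide (y l ≠ decide
        (∀ i : Fin k, ∃ j : Fin m, b (i, j) = true ∧ X l j = true))) ?_
    · convert h using 4
      simp
    · intro l hl
      simpa using hl
  constructor
  · intro b
    calc _ ≤ ((Finset.univ.filter (fun l : Fin n => ηstar l = true)).card : ℝ)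
          + lam * ((Finset.univ.filter (fun p : Fin k × Fin m => bstar p = true)).card : ℝ) := by
            linarith [hErr_le]
      _ ≤ _ := hwt b
  · have h1 := hwt bstar
    linarith [hErr_le]
end

section
/- The single implication in the hard clause acts as a double implication due to the soft clauses: in any optimal assignment (b*, η*) of the MaxSAT encoding, for every sample index l one has η* l = true if and only if y l ≠ φ_l(b*); i.e., the error variable of sample l is true exactly when sample l is misclassified by the constructed classifier R_{b*}. -/
/-- In any optimal assignment `(b*, η*)` of the MaxSAT encoding, the error
variable of sample `l` is true exactly when sample `l` is misclassified by the
constructed classifier: `η* l = true ↔ y l ≠ φ_l(b*)`. -/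
theorem maxsat_error_variable_iff_misclassified
    (n m k : ℕ)
    (X : Fin n → Fin m → Bool) (y : Fin n → Bool)
    (lam : ℝ) (hlam : 0 ≤ lam)
    (bstar : Fin k × Fin m → Bool) (ηstar : Fin n → Bool)
    (hhard : ∀ l : Fin n, ηstar l = false →
      y l = decide (∀ i : Fin k, ∃ j : Fin m, bstar (i, j) = true ∧ X l j = true))
    (hopt : ∀ (b : Fin k × Fin m → Bool) (η : Fin n → Bool),
      (∀ l : Fin n, η l = false →
        y l = decide (∀ i : Fin k, ∃ j : Fin m, b (i, j) = true ∧ X l j = true)) →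
      ((Finset.univ.filter (fun l : Fin n => ηstar l = true)).card : ℝ)
          + lam * ((Finset.univ.filter (fun p : Fin k × Fin m => bstar p = true)).card : ℝ)
        ≤ ((Finset.univ.filter (fun l : Fin n => η l = true)).card : ℝ)
          + lam * ((Finset.univ.filter (fun p : Fin k × Fin m => b p = true)).card : ℝ)) :
    ∀ l : Fin n,
      ηstar l = true ↔
        y l ≠ decide (∀ i : Fin k, ∃ j : Fin m, bstar (i, j) = true ∧ X l j = true) := by
  intro l
  constructor
  · intro hl hy
    -- define η' with l flipped to false
    set η' : Fin n → Bool := fun l' => if l' = l then false else ηstar l' with hη'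
    have hhard' : ∀ l' : Fin n, η' l' = false →
        y l' = decide (∀ i : Fin k, ∃ j : Fin m, bstar (i, j) = true ∧ X l' j = true) := by
      intro l' h
      by_cases hc : l' = l
      · subst hc; exact hy
      · exact hhard l' (by simpa [hη', hc] using h)
    have := hopt bstar η' hhard'
    have hsub : (Finset.univ.filter (fun l' : Fin n => η' l' = true)) ⊆
        (Finset.univ.filter (fun l' : Fin n => ηstar l' = true)) \ {l} := by
      intro x hx
      simp only [Finset.mem_filter, Finset.mem_univ, true_and, hη'] at hx
      by_cases hc : x = l
      · simp [hc] at hx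
      · simp [Finset.mem_sdiff, Finset.mem_filter, hc]
        simpa [hc] using hx
    have hmem : l ∈ (Finset.univ.filter (fun l' : Fin n => ηstar l' = true)) := by
      simp [hl]
    have hcard : (Finset.univ.filter (fun l' : Fin n => η' l' = true)).card <
        (Finset.univ.filter (fun l' : Fin n => ηstar l' = true)).card := by
      calc (Finset.univ.filter (fun l' : Fin n => η' l' = true)).card
          ≤ ((Finset.univ.filter (fun l' : Fin n => ηstar l' = true)) \ {l}).card :=
            Finset.card_le_card hsub
        _ < (Finset.univ.filter (fun l' : Fin n => ηstar l' = true)).card := by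
            rw [Finset.card_sdiff_of_subset (by simpa using hmem)]
            simpa using Nat.sub_lt (Finset.card_pos.mpr ⟨l, hmem⟩) Nat.one_pos
    have : ((Finset.univ.filter (fun l' : Fin n => ηstar l' = true)).card : ℝ) ≤
        ((Finset.univ.filter (fun l' : Fin n => η' l' = true)).card : ℝ) := by
      linarith
    exact absurd this (by exact_mod_cast Nat.not_le.mpr hcard)
  · intro hy
    by_contra h
    exact hy (hhard l (by simpa using h))
end

section
/- Correctness of the mini-batch MaxSAT formulation: fix a previous k-clause CNF classifier R' = (C'_1, …, C'_k), mini-batch data X : Fin n' → Fin m → Bool with labels y : Fin n' → Bool, and real λ ≥ 0. Define the mini-batch weight wt'(b, η) := |{l | η l = true}| + λ·|{(i,j) | b (i,j) ≠ decide (j ∈ C'_i)}| and keep the hard constraints: for every l, η l = false → y l = φ_l(b). If (b*, η*) satisfies all hard constraints and minimizes wt' among such assignments, then the constructed classifier R_{b*} minimizes the mini-batch objective over all k-clause CNF classifiers: for every b, |E(R_{b*})| + λ·d_H(R_{b*}, R') ≤ |E(R_b)| + λ·d_H(R_b, R'). -/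
lemma dH_eq (m k : ℕ) (C' : Fin k → Finset (Fin m)) (b : Fin k × Fin m → Bool) :
    (Finset.univ.filter (fun p : Fin k × Fin m =>
        b p ≠ decide (p.2 ∈ C' p.1))).card
    = ∑ i : Fin k,
        (((Finset.univ.filter (fun j : Fin m => b (i, j) = true)) \ C' i).card
          + (C' i \ (Finset.univ.filter (fun j : Fin m => b (i, j) = true))).card) := by
  rw [Finset.card_filter, Fintype.sum_prod_type]
  refine Finset.sum_congr rfl fun i _ => ?_
  have h1 : (Finset.univ.filter (fun j : Fin m => b (i, j) = true)) \ C' i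
      = Finset.univ.filter (fun j => b (i, j) = true ∧ j ∉ C' i) := by
    ext j; simp [and_comm]
  have h2 : C' i \ (Finset.univ.filter (fun j : Fin m => b (i, j) = true))
      = Finset.univ.filter (fun j => b (i, j) = false ∧ j ∈ C' i) := by
    ext j; simp [and_comm]
  rw [h1, h2, Finset.card_filter, Finset.card_filter, ← Finset.sum_add_distrib]
  refine Finset.sum_congr rfl fun j _ => ?_
  by_cases hb : b (i, j) = true <;> by_cases hc : j ∈ C' i <;> simp [hb, hc]

/-- Correctness of the mini-batch MaxSAT formulation: if `(b*, η*)`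
satisfies all hard constraints and minimizes the mini-batch weight
`wt'(b,η) = |{l | η l}| + λ·|{(i,j) | b (i,j) ≠ decide (p.2 ∈ C'_i)}|` among such
assignments, then the constructed classifier `R_{b*}` minimizes the mini-batch
objective `|E(R_b)| + λ·d_H(R_b, R')` over all k-clause CNF classifiers. -/
theorem minibatch_maxsat_correctness
    (n' m k : ℕ)
    (X : Fin n' → Fin m → Bool) (y : Fin n' → Bool)
    (lam : ℝ) (hlam : 0 ≤ lam)
    (C' : Fin k → Finset (Fin m))
    (bstar : Fin k × Fin m → Bool) (ηstar : Fin n' → Bool)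
    (hhard : ∀ l : Fin n', ηstar l = false →
      y l = decide (∀ i : Fin k, ∃ j : Fin m, bstar (i, j) = true ∧ X l j = true))
    (hopt : ∀ (b : Fin k × Fin m → Bool) (η : Fin n' → Bool),
      (∀ l : Fin n', η l = false →
        y l = decide (∀ i : Fin k, ∃ j : Fin m, b (i, j) = true ∧ X l j = true)) →
      ((Finset.univ.filter (fun l : Fin n' => ηstar l = true)).card : ℝ)
          + lam * ((Finset.univ.filter (fun p : Fin k × Fin m =>
              bstar p ≠ decide (p.2 ∈ C' p.1))).card : ℝ)
        ≤ ((Finset.univ.filter (fun l : Fin n' => η l = true)).card : ℝ)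
          + lam * ((Finset.univ.filter (fun p : Fin k × Fin m =>
              b p ≠ decide (p.2 ∈ C' p.1))).card : ℝ)) :
    ∀ b : Fin k × Fin m → Bool,
      ((Finset.univ.filter (fun l : Fin n' =>
            y l ≠ decide (∀ i : Fin k, ∃ j : Fin m, bstar (i, j) = true ∧ X l j = true))).card : ℝ)
          + lam * (((∑ i : Fin k,
              (((Finset.univ.filter (fun j : Fin m => bstar (i, j) = true)) \ C' i).card
                + (C' i \ (Finset.univ.filter (fun j : Fin m => bstar (i, j) = true))).card)) : ℕ) : ℝ)
        ≤ ((Finset.univ.filter (fun l : Fin n' =>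
            y l ≠ decide (∀ i : Fin k, ∃ j : Fin m, b (i, j) = true ∧ X l j = true))).card : ℝ)
          + lam * (((∑ i : Fin k,
              (((Finset.univ.filter (fun j : Fin m => b (i, j) = true)) \ C' i).card
                + (C' i \ (Finset.univ.filter (fun j : Fin m => b (i, j) = true))).card)) : ℕ) : ℝ) := by
  intro b
  rw [← dH_eq m k C' bstar, ← dH_eq m k C' b]
  set η : Fin n' → Bool := fun l =>
    decide (y l ≠ decide (∀ i : Fin k, ∃ j : Fin m, b (i, j) = true ∧ X l j = true)) with hη
  have hconstr : ∀ l : Fin n', η l = false →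
      y l = decide (∀ i : Fin k, ∃ j : Fin m, b (i, j) = true ∧ X l j = true) := by
    intro l hl
    simpa [hη] using hl
  have heq : (Finset.univ.filter (fun l : Fin n' =>
      y l ≠ decide (∀ i : Fin k, ∃ j : Fin m, b (i, j) = true ∧ X l j = true)))
      = Finset.univ.filter (fun l => η l = true) := by
    ext l; simp [hη]
  have hsub : (Finset.univ.filter (fun l : Fin n' =>
      y l ≠ decide (∀ i : Fin k, ∃ j : Fin m, bstar (i, j) = true ∧ X l j = true)))
      ⊆ Finset.univ.filter (fun l => ηstar l = true) := by
    intro l hl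
    simp only [Finset.mem_filter, Finset.mem_univ, true_and] at hl ⊢
    cases h : ηstar l with
    | false => exact absurd (hhard l h) hl
    | true => rfl
  have h1 : ((Finset.univ.filter (fun l : Fin n' =>
      y l ≠ decide (∀ i : Fin k, ∃ j : Fin m, bstar (i, j) = true ∧ X l j = true))).card : ℝ)
      ≤ ((Finset.univ.filter (fun l : Fin n' => ηstar l = true)).card : ℝ) := by
    exact_mod_cast Finset.card_le_card hsub
  have h2 := hopt b η hconstr
  rw [heq]
  linarith
end
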